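/- arXiv:2507.17166 — 3 statements merged into one kernel-verified Lean document; each statement's English description precedes it below -/
import Mathlib

section
/- Let d ≥ 1 and l > d. Then there exists a constant N = N(d,l) > 0 such that for every x ∈ ℝ^d, ∫_{ℝ^d} (1+|y|^l)^{−1} (1+|x−y|^l)^{−1} dy ≤ N (1+|x|^{l−d})^{−1}. -/
open MeasureTheory Real ENNReal


-- Lemma A: (1+t)^l ≤ 2^l * (1+t^l)
private lemma lemA {l t : ℝ} (hl : 0 < l) (ht : 0 ≤ t) :
    (1 + t) ^ l ≤ 2 ^ l * (1 + t ^ l) := by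
  have h1 : (1 + t : ℝ) ≤ 2 * max 1 t := by
    rcases le_total t 1 with h | h
    · simp [max_eq_left h]; linarith
    · simp [max_eq_right h]; linarith
  calc (1 + t) ^ l ≤ (2 * max 1 t) ^ l :=
        Real.rpow_le_rpow (by linarith) h1 hl.le
    _ = 2 ^ l * (max 1 t) ^ l := Real.mul_rpow (by norm_num) (le_max_of_le_left zero_le_one)
    _ ≤ 2 ^ l * (1 + t ^ l) := by
        gcongr
        rcases le_total t 1 with h | h
        · rw [max_eq_left h, Real.one_rpow]
          have : 0 ≤ t ^ l := Real.rpow_nonneg ht l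
          linarith
        · rw [max_eq_right h]
          linarith

-- Lemma B: 1 + t^(l-d) ≤ (2^l+2) * (1 + (t/2)^l)
private lemma lemB {l t : ℝ} {d : ℕ} (hd : 1 ≤ d) (hl : (d:ℝ) < l) (ht : 0 ≤ t) :
    1 + t ^ (l - (d:ℝ)) ≤ (2 ^ l + 2) * (1 + (t / 2) ^ l) := by
  have hl0 : (0:ℝ) < l := lt_of_le_of_lt (by exact_mod_cast Nat.zero_le d) hl
  have hld : (0:ℝ) < l - d := sub_pos.mpr hl
  have h2l : (0:ℝ) < 2 ^ l := Real.rpow_pos_of_pos (by norm_num) l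
  have ht2 : (0:ℝ) ≤ (t / 2) ^ l := Real.rpow_nonneg (by linarith) l
  rcases le_total t 1 with h | h
  · have : t ^ (l - (d:ℝ)) ≤ 1 := Real.rpow_le_one ht h hld.le
    nlinarith
  · have h1 : t ^ (l - (d:ℝ)) ≤ t ^ l := by
      apply Real.rpow_le_rpow_of_exponent_le h
      have : (1:ℝ) ≤ (d:ℝ) := by exact_mod_cast hd
      linarith
    have h2 : t ^ l = 2 ^ l * (t / 2) ^ l := by
      rw [← Real.mul_rpow (by norm_num) (by linarith)]
      ring_nf
    nlinarith


/-- Let d ≥ 1 and l > d. Then there exists N = N(d,l) > 0 such that for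
every x ∈ ℝ^d, ∫ (1+|y|^l)⁻¹ (1+|x−y|^l)⁻¹ dy ≤ N (1+|x|^{l−d})⁻¹. -/
theorem stmt_1 (d : ℕ) (hd : 1 ≤ d) (l : ℝ) (hl : (d : ℝ) < l) :
    ∃ N : ℝ, 0 < N ∧
      ∀ x : EuclideanSpace ℝ (Fin d),
        (∫⁻ y : EuclideanSpace ℝ (Fin d),
            ENNReal.ofReal ((1 + ‖y‖ ^ l)⁻¹ * (1 + ‖x - y‖ ^ l)⁻¹)) ≤
          ENNReal.ofReal (N * (1 + ‖x‖ ^ (l - (d : ℝ)))⁻¹) := by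
  have hl0 : (0:ℝ) < l := lt_of_le_of_lt (by exact_mod_cast Nat.zero_le d) hl
  set E := EuclideanSpace ℝ (Fin d)
  -- the one-variable kernel
  set a : E → ℝ≥0∞ := fun y => ENNReal.ofReal ((1 + ‖y‖ ^ l)⁻¹) with ha_def
  have ha_meas : Measurable a := by
    apply Measurable.ennreal_ofReal
    fun_prop
  -- finiteness of C = ∫ a
  set C : ℝ≥0∞ := ∫⁻ y : E, a y with hC_def
  have hC_lt : C < ⊤ := by
    have hfin : (∫⁻ y : E, ENNReal.ofReal ((1 + ‖y‖) ^ (-l))) < ⊤ := by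
      apply finite_integral_one_add_norm
      rw [finrank_euclideanSpace_fin]; exact hl
    have hbound : ∀ y : E, a y ≤ ENNReal.ofReal (2 ^ l) * ENNReal.ofReal ((1 + ‖y‖) ^ (-l)) := by
      intro y
      rw [← ENNReal.ofReal_mul (Real.rpow_nonneg (by norm_num) l)]
      apply ENNReal.ofReal_le_ofReal
      have hny : (0:ℝ) ≤ ‖y‖ := norm_nonneg y
      have h1 : (0:ℝ) < 1 + ‖y‖ ^ l := by positivity
      have h2 : (0:ℝ) < 1 + ‖y‖ := by linarith
      rw [Real.rpow_neg h2.le, ← one_div, ← one_div, mul_one_div, div_le_div_iff₀ h1 (Real.rpow_pos_of_pos h2 l)]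
      calc 1 * (1 + ‖y‖) ^ l = (1 + ‖y‖) ^ l := one_mul _
        _ ≤ 2 ^ l * (1 + ‖y‖ ^ l) := lemA hl0 hny
    calc C ≤ ∫⁻ y : E, ENNReal.ofReal (2 ^ l) * ENNReal.ofReal ((1 + ‖y‖) ^ (-l)) :=
          lintegral_mono hbound
      _ = ENNReal.ofReal (2 ^ l) * ∫⁻ y : E, ENNReal.ofReal ((1 + ‖y‖) ^ (-l)) :=
          lintegral_const_mul _ (by fun_prop)
      _ < ⊤ := ENNReal.mul_lt_top ENNReal.ofReal_lt_top hfin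
  set M : ℝ := C.toReal with hM_def
  have hM0 : 0 ≤ M := ENNReal.toReal_nonneg
  have hC_eq : C = ENNReal.ofReal M := (ENNReal.ofReal_toReal hC_lt.ne).symm
  refine ⟨(2 * M + 1) * (2 ^ l + 2), by positivity, fun x => ?_⟩
  set t := ‖x‖ with ht_def
  have ht0 : (0:ℝ) ≤ t := norm_nonneg x
  have hgx : (0:ℝ) < 1 + (t / 2) ^ l := by positivity
  -- pointwise bound
  have hpt : ∀ y : E,
      ENNReal.ofReal ((1 + ‖y‖ ^ l)⁻¹ * (1 + ‖x - y‖ ^ l)⁻¹) ≤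
        ENNReal.ofReal ((1 + (t / 2) ^ l)⁻¹) * (a y + ENNReal.ofReal ((1 + ‖x - y‖ ^ l)⁻¹)) := by
    intro y
    have h1 : (0:ℝ) < 1 + ‖y‖ ^ l := by positivity
    have h2 : (0:ℝ) < 1 + ‖x - y‖ ^ l := by positivity
    rw [ha_def, ← ENNReal.ofReal_add (by positivity) (by positivity),
      ← ENNReal.ofReal_mul (by positivity)]
    apply ENNReal.ofReal_le_ofReal
    -- one of ‖y‖, ‖x-y‖ is ≥ t/2
    have htri : t ≤ ‖y‖ + ‖x - y‖ := by
      calc t = ‖y + (x - y)‖ := by rw [ht_def]; congr 1; abel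
        _ ≤ ‖y‖ + ‖x - y‖ := norm_add_le _ _
    have key : (1 + ‖y‖ ^ l)⁻¹ ≤ (1 + (t / 2) ^ l)⁻¹ ∨
        (1 + ‖x - y‖ ^ l)⁻¹ ≤ (1 + (t / 2) ^ l)⁻¹ := by
      rcases le_total (t / 2) ‖y‖ with h | h
      · left
        apply inv_anti₀ hgx
        have := Real.rpow_le_rpow (by linarith) h hl0.le
        linarith
      · right
        apply inv_anti₀ hgx
        have h' : t / 2 ≤ ‖x - y‖ := by linarith
        have := Real.rpow_le_rpow (by linarith) h' hl0.le
        linarith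
    have ha' : (0:ℝ) ≤ (1 + ‖y‖ ^ l)⁻¹ := by positivity
    have hb' : (0:ℝ) ≤ (1 + ‖x - y‖ ^ l)⁻¹ := by positivity
    have hg' : (0:ℝ) ≤ (1 + (t / 2) ^ l)⁻¹ := by positivity
    rcases key with h | h
    · nlinarith
    · nlinarith
  calc (∫⁻ y : E, ENNReal.ofReal ((1 + ‖y‖ ^ l)⁻¹ * (1 + ‖x - y‖ ^ l)⁻¹))
      ≤ ∫⁻ y : E, ENNReal.ofReal ((1 + (t / 2) ^ l)⁻¹) *
          (a y + ENNReal.ofReal ((1 + ‖x - y‖ ^ l)⁻¹)) := lintegral_mono hpt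
    _ = ENNReal.ofReal ((1 + (t / 2) ^ l)⁻¹) *
          ∫⁻ y : E, (a y + ENNReal.ofReal ((1 + ‖x - y‖ ^ l)⁻¹)) := by
        apply lintegral_const_mul
        apply Measurable.add ha_meas
        apply Measurable.ennreal_ofReal
        fun_prop
    _ = ENNReal.ofReal ((1 + (t / 2) ^ l)⁻¹) * (C + C) := by
        congr 1
        rw [lintegral_add_left ha_meas]
        congr 1
        have : ∀ y : E, ENNReal.ofReal ((1 + ‖x - y‖ ^ l)⁻¹) = a (y - x) := by
          intro y
          rw [ha_def]
          simp only [norm_sub_rev x y]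
        simp_rw [this]
        exact lintegral_sub_right_eq_self a x
    _ = ENNReal.ofReal ((1 + (t / 2) ^ l)⁻¹ * (M + M)) := by
        rw [hC_eq, ← ENNReal.ofReal_add hM0 hM0,
          ← ENNReal.ofReal_mul (by positivity)]
    _ ≤ ENNReal.ofReal ((2 * M + 1) * (2 ^ l + 2) * (1 + t ^ (l - (d:ℝ)))⁻¹) := by
        apply ENNReal.ofReal_le_ofReal
        have hB := lemB hd hl ht0
        have htl : (0:ℝ) < 1 + t ^ (l - (d:ℝ)) := by positivity
        have h2l : (0:ℝ) < 2 ^ l + 2 := by positivity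
        have h1 : (1 + (t / 2) ^ l)⁻¹ ≤ (2 ^ l + 2) * (1 + t ^ (l - (d:ℝ)))⁻¹ := by
          rw [← one_div, ← one_div, mul_one_div, div_le_div_iff₀ hgx htl]
          nlinarith [hB]
        have hBi : (0:ℝ) ≤ (1 + t ^ (l - (d:ℝ)))⁻¹ := by positivity
        calc (1 + (t / 2) ^ l)⁻¹ * (M + M)
            ≤ ((2 ^ l + 2) * (1 + t ^ (l - (d:ℝ)))⁻¹) * (M + M) :=
              mul_le_mul_of_nonneg_right h1 (by linarith)
          _ ≤ (2 * M + 1) * (2 ^ l + 2) * (1 + t ^ (l - (d:ℝ)))⁻¹ := by nlinarith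
end

section
/- Let d ≥ 1, k ≥ 0, and let Π be a nonnegative Borel measure on ℝ^d with ∫_{ℝ^d} (1+|x|^k)^{−1} Π(dx) < ∞. Then for every l > d + k there exists a constant N > 0 such that for all Schwartz functions φ₁, φ₂ on ℝ^d the function x ↦ (φ₁ * φ̌₂)(x) is Π-integrable and |∫_{ℝ^d} (φ₁ * φ̌₂)(x) Π(dx)| ≤ N · sup_y |(1+|y|^l) φ₁(y)| · sup_y |(1+|y|^l) φ₂(y)|, where φ̌₂(y) := φ₂(−y). -/
open MeasureTheory

lemma aux_inv (a l : ℝ) (ha : 0 ≤ a) (hl : 0 ≤ l) :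
    (1 + a ^ l)⁻¹ ≤ 2 ^ l * ((1 + a) ^ l)⁻¹ := by
  have h1 : (0:ℝ) < 1 + a ^ l := by positivity
  have h2 : (0:ℝ) < (1 + a) ^ l := Real.rpow_pos_of_pos (by linarith) _
  have hA : (1 + a) ^ l ≤ 2 ^ l * (1 + a ^ l) := by
    have hmax : 1 + a ≤ 2 * max 1 a := by
      have := le_max_left 1 a; have := le_max_right 1 a; linarith
    calc (1 + a) ^ l ≤ (2 * max 1 a) ^ l :=
          Real.rpow_le_rpow (by linarith) hmax hl
      _ = 2 ^ l * (max 1 a) ^ l := Real.mul_rpow (by norm_num) (by positivity)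
      _ ≤ 2 ^ l * (1 + a ^ l) := by
          have hm : (max 1 a) ^ l ≤ 1 + a ^ l := by
            rcases le_total a 1 with h | h
            · rw [max_eq_left h, Real.one_rpow]
              have : (0:ℝ) ≤ a ^ l := Real.rpow_nonneg ha l
              linarith
            · rw [max_eq_right h]; linarith
          have : (0:ℝ) ≤ (2:ℝ) ^ l := Real.rpow_nonneg (by norm_num) l
          nlinarith
  rw [inv_eq_one_div, inv_eq_one_div, mul_one_div, div_le_div_iff₀ h1 h2]
  linarith

lemma aux_key {E : Type*} [NormedAddCommGroup E] (k l : ℝ) (hk : 0 ≤ k) (hkl : k ≤ l)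
    (x y : E) :
    (1 + ‖x‖ ^ k) * ((1 + ‖y‖ ^ l)⁻¹ * (1 + ‖y - x‖ ^ l)⁻¹) ≤
      2 * 4 ^ l * (1 + ‖y‖) ^ (k - l) := by
  have hl : 0 ≤ l := hk.trans hkl
  set a := ‖y‖ with ha'
  set b := ‖y - x‖ with hb'
  set c := ‖x‖ with hc'
  have ha : 0 ≤ a := norm_nonneg _
  have hb : 0 ≤ b := norm_nonneg _
  have hc : 0 ≤ c := norm_nonneg _
  have hcab : c ≤ a + b := by
    have h := norm_sub_le y (y - x)
    have : y - (y - x) = x := by abel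
    rw [this] at h
    exact h
  have pa : (0:ℝ) < 1 + a := by linarith
  have pb : (0:ℝ) < 1 + b := by linarith
  have h1 : 1 + c ^ k ≤ 2 * ((1 + a) ^ k * (1 + b) ^ k) := by
    have hck : c ^ k ≤ (1 + a) ^ k * (1 + b) ^ k := by
      calc c ^ k ≤ ((1 + a) * (1 + b)) ^ k :=
            Real.rpow_le_rpow hc (by nlinarith) hk
        _ = _ := Real.mul_rpow pa.le pb.le
    have h1' : (1:ℝ) ≤ (1 + a) ^ k * (1 + b) ^ k := by
      have ha1 : (1:ℝ) ≤ (1 + a) ^ k := Real.one_le_rpow (by linarith) hk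
      have hb1 : (1:ℝ) ≤ (1 + b) ^ k := Real.one_le_rpow (by linarith) hk
      nlinarith
    linarith
  have h2 := aux_inv a l ha hl
  have h3 := aux_inv b l hb hl
  have hinva : (0:ℝ) ≤ (1 + a ^ l)⁻¹ := by positivity
  have hinvb : (0:ℝ) ≤ (1 + b ^ l)⁻¹ := by positivity
  calc (1 + c ^ k) * ((1 + a ^ l)⁻¹ * (1 + b ^ l)⁻¹)
      ≤ (2 * ((1 + a) ^ k * (1 + b) ^ k)) *
        ((2 ^ l * ((1 + a) ^ l)⁻¹) * (2 ^ l * ((1 + b) ^ l)⁻¹)) := by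
        have := mul_le_mul h2 h3 hinvb (by positivity)
        exact mul_le_mul h1 this (by positivity) (by positivity)
    _ = 2 * 4 ^ l * ((1 + a) ^ (k - l) * (1 + b) ^ (k - l)) := by
        rw [Real.rpow_sub pa, Real.rpow_sub pb, div_eq_mul_inv, div_eq_mul_inv,
          show (4:ℝ) = 2 * 2 by norm_num, Real.mul_rpow (by norm_num) (by norm_num)]
        ring
    _ ≤ 2 * 4 ^ l * ((1 + a) ^ (k - l) * 1) := by
        gcongr
        exact Real.rpow_le_one_of_one_le_of_nonpos (by linarith) (by linarith)
    _ = 2 * 4 ^ l * (1 + a) ^ (k - l) := by ring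

lemma aux_bdd {E : Type*} [NormedAddCommGroup E] [NormedSpace ℝ E] (l : ℝ) (hl : 0 ≤ l)
    (φ : SchwartzMap E ℝ) :
    BddAbove (Set.range fun y => |(1 + ‖y‖ ^ l) * φ y|) := by
  obtain ⟨C1, -, hC1⟩ := φ.decay ⌈l⌉₊ 0
  obtain ⟨C0, -, hC0⟩ := φ.decay 0 0
  refine ⟨2 * C0 + C1, ?_⟩
  rintro _ ⟨y, rfl⟩
  have h0 := hC0 y
  have h1 := hC1 y
  simp only [pow_zero, one_mul, norm_iteratedFDeriv_zero] at h0 h1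
  have hyl : ‖y‖ ^ l ≤ 1 + ‖y‖ ^ (⌈l⌉₊ : ℕ) := by
    rcases le_total ‖y‖ 1 with h | h
    · have := Real.rpow_le_one (norm_nonneg y) h hl
      have : (0:ℝ) ≤ ‖y‖ ^ (⌈l⌉₊ : ℕ) := by positivity
      have h2 := Real.rpow_le_one (norm_nonneg y) h hl
      linarith
    · have h2 : ‖y‖ ^ l ≤ ‖y‖ ^ ((⌈l⌉₊ : ℕ) : ℝ) :=
        Real.rpow_le_rpow_of_exponent_le h (Nat.le_ceil l)
      rw [Real.rpow_natCast] at h2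
      linarith
  have habs : |(1 + ‖y‖ ^ l) * φ y| = (1 + ‖y‖ ^ l) * |φ y| := by
    rw [abs_mul, abs_of_pos (by positivity)]
  show |(1 + ‖y‖ ^ l) * φ y| ≤ 2 * C0 + C1
  rw [habs]
  have hn : |φ y| = ‖φ y‖ := (Real.norm_eq_abs _).symm
  have hphi : (0:ℝ) ≤ |φ y| := abs_nonneg _
  rw [hn] at hphi ⊢
  nlinarith [Real.rpow_nonneg (norm_nonneg y) l]

/-- Let d ≥ 1, k ≥ 0, and let Π be a nonnegative Borel measure on ℝ^d with
∫ (1+|x|^k)⁻¹ Π(dx) < ∞. Then for every l > d + k there exists N > 0 such that for all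
Schwartz functions φ₁, φ₂ the function x ↦ (φ₁ * φ̌₂)(x) is Π-integrable and
|∫ (φ₁ * φ̌₂)(x) Π(dx)| ≤ N · sup_y |(1+|y|^l) φ₁(y)| · sup_y |(1+|y|^l) φ₂(y)|. -/
theorem stmt_2 (d : ℕ) (hd : 1 ≤ d) (k : ℝ) (hk : 0 ≤ k)
    (μ : Measure (EuclideanSpace ℝ (Fin d)))
    (hμ : Integrable (fun x => (1 + ‖x‖ ^ k)⁻¹) μ)
    (l : ℝ) (hl : (d : ℝ) + k < l) :
    ∃ N : ℝ, 0 < N ∧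
      ∀ (φ₁ φ₂ : SchwartzMap (EuclideanSpace ℝ (Fin d)) ℝ),
        Integrable (fun x => ∫ y, φ₁ y * φ₂ (y - x)) μ ∧
        |∫ x, (∫ y, φ₁ y * φ₂ (y - x)) ∂μ| ≤
          N * (⨆ y, |(1 + ‖y‖ ^ l) * φ₁ y|) * (⨆ y, |(1 + ‖y‖ ^ l) * φ₂ y|) := by
  set E := EuclideanSpace ℝ (Fin d)
  have hd0 : (0:ℝ) ≤ d := Nat.cast_nonneg d
  have hkl : k ≤ l := by linarith
  have hl0 : 0 ≤ l := hk.trans hkl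
  -- the kernel integral
  have hJ : Integrable (fun y : E => (1 + ‖y‖) ^ (k - l)) := by
    have hr : ((Module.finrank ℝ E : ℝ)) < l - k := by
      rw [finrank_euclideanSpace_fin]; linarith
    have := integrable_one_add_norm (E := E) (μ := volume) hr
    simpa [neg_sub] using this
  set J := ∫ y : E, (1 + ‖y‖) ^ (k - l) with hJdef
  have hJ0 : 0 ≤ J := integral_nonneg fun y => Real.rpow_nonneg (by positivity) _
  set C₀ := ∫ x, (1 + ‖x‖ ^ k)⁻¹ ∂μ with hC₀def
  have hC₀0 : 0 ≤ C₀ := integral_nonneg fun x => by positivity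
  have h4l : (0:ℝ) ≤ 2 * 4 ^ l := by positivity
  have hprod : 0 ≤ 2 * 4 ^ l * J * C₀ := mul_nonneg (mul_nonneg h4l hJ0) hC₀0
  refine ⟨2 * 4 ^ l * J * C₀ + 1, by linarith, fun φ₁ φ₂ => ?_⟩
  set S₁ := ⨆ y, |(1 + ‖y‖ ^ l) * φ₁ y| with hS₁def
  set S₂ := ⨆ y, |(1 + ‖y‖ ^ l) * φ₂ y| with hS₂def
  have hb₁ := aux_bdd l hl0 φ₁
  have hb₂ := aux_bdd l hl0 φ₂
  have hS₁ : ∀ y, |(1 + ‖y‖ ^ l) * φ₁ y| ≤ S₁ := fun y => le_ciSup hb₁ y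
  have hS₂ : ∀ y, |(1 + ‖y‖ ^ l) * φ₂ y| ≤ S₂ := fun y => le_ciSup hb₂ y
  have hS₁0 : 0 ≤ S₁ := (abs_nonneg _).trans (hS₁ 0)
  have hS₂0 : 0 ≤ S₂ := (abs_nonneg _).trans (hS₂ 0)
  -- pointwise bound on individual Schwartz functions
  have hphi : ∀ (φ : SchwartzMap E ℝ) (S : ℝ), (∀ y, |(1 + ‖y‖ ^ l) * φ y| ≤ S) →
      ∀ y, |φ y| ≤ S * (1 + ‖y‖ ^ l)⁻¹ := by
    intro φ S hS y
    have hpos : (0:ℝ) < 1 + ‖y‖ ^ l := by positivity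
    have h := hS y
    rw [abs_mul, abs_of_pos hpos] at h
    rw [le_mul_inv_iff₀ hpos]
    linarith [h]
  -- pointwise bound on the convolution integrand
  have hpt : ∀ x y : E, ‖φ₁ y * φ₂ (y - x)‖ ≤
      S₁ * S₂ * (2 * 4 ^ l) * (1 + ‖x‖ ^ k)⁻¹ * (1 + ‖y‖) ^ (k - l) := by
    intro x y
    have h₁ := hphi φ₁ S₁ hS₁ y
    have h₂ := hphi φ₂ S₂ hS₂ (y - x)
    have hP : ‖φ₁ y * φ₂ (y - x)‖ ≤
        S₁ * S₂ * ((1 + ‖y‖ ^ l)⁻¹ * (1 + ‖y - x‖ ^ l)⁻¹) := by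
      rw [norm_mul]
      calc ‖φ₁ y‖ * ‖φ₂ (y - x)‖
          ≤ (S₁ * (1 + ‖y‖ ^ l)⁻¹) * (S₂ * (1 + ‖y - x‖ ^ l)⁻¹) := by
            rw [Real.norm_eq_abs, Real.norm_eq_abs]
            exact mul_le_mul h₁ h₂ (abs_nonneg _) (by positivity)
        _ = S₁ * S₂ * ((1 + ‖y‖ ^ l)⁻¹ * (1 + ‖y - x‖ ^ l)⁻¹) := by ring
    have hkey := aux_key k l hk hkl x y
    have hxk : (0:ℝ) < 1 + ‖x‖ ^ k := by positivity
    have hQ : (1 + ‖y‖ ^ l)⁻¹ * (1 + ‖y - x‖ ^ l)⁻¹ ≤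
        2 * 4 ^ l * (1 + ‖y‖) ^ (k - l) * (1 + ‖x‖ ^ k)⁻¹ := by
      rw [le_mul_inv_iff₀ hxk]
      calc ((1 + ‖y‖ ^ l)⁻¹ * (1 + ‖y - x‖ ^ l)⁻¹) * (1 + ‖x‖ ^ k)
          = (1 + ‖x‖ ^ k) * ((1 + ‖y‖ ^ l)⁻¹ * (1 + ‖y - x‖ ^ l)⁻¹) := by ring
        _ ≤ _ := hkey
    calc ‖φ₁ y * φ₂ (y - x)‖
        ≤ S₁ * S₂ * ((1 + ‖y‖ ^ l)⁻¹ * (1 + ‖y - x‖ ^ l)⁻¹) := hP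
      _ ≤ S₁ * S₂ * (2 * 4 ^ l * (1 + ‖y‖) ^ (k - l) * (1 + ‖x‖ ^ k)⁻¹) := by
          exact mul_le_mul_of_nonneg_left hQ (by positivity)
      _ = S₁ * S₂ * (2 * 4 ^ l) * (1 + ‖x‖ ^ k)⁻¹ * (1 + ‖y‖) ^ (k - l) := by ring
  -- bound on the inner integral
  have hconv : ∀ x : E, ‖∫ y, φ₁ y * φ₂ (y - x)‖ ≤
      S₁ * S₂ * (2 * 4 ^ l) * J * (1 + ‖x‖ ^ k)⁻¹ := by
    intro x
    calc ‖∫ y, φ₁ y * φ₂ (y - x)‖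
        ≤ ∫ y, ‖φ₁ y * φ₂ (y - x)‖ := norm_integral_le_integral_norm _
      _ ≤ ∫ y, (S₁ * S₂ * (2 * 4 ^ l) * (1 + ‖x‖ ^ k)⁻¹) * (1 + ‖y‖) ^ (k - l) := by
          refine integral_mono_of_nonneg (Filter.Eventually.of_forall fun y => norm_nonneg _)
            (hJ.const_mul _) (Filter.Eventually.of_forall fun y => hpt x y)
      _ = (S₁ * S₂ * (2 * 4 ^ l) * (1 + ‖x‖ ^ k)⁻¹) * J := integral_const_mul _ _
      _ = S₁ * S₂ * (2 * 4 ^ l) * J * (1 + ‖x‖ ^ k)⁻¹ := by ring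
  -- measurability
  have hmeas : AEStronglyMeasurable (fun x : E => ∫ y, φ₁ y * φ₂ (y - x)) μ := by
    have hcont : Continuous (fun p : E × E => φ₁ p.2 * φ₂ (p.2 - p.1)) :=
      (φ₁.continuous.comp continuous_snd).mul
        (φ₂.continuous.comp (continuous_snd.sub continuous_fst))
    exact (hcont.stronglyMeasurable.integral_prod_right').aestronglyMeasurable
  have hInt : Integrable (fun x : E => ∫ y, φ₁ y * φ₂ (y - x)) μ := by
    refine Integrable.mono' (hμ.const_mul (S₁ * S₂ * (2 * 4 ^ l) * J)) hmeas
      (Filter.Eventually.of_forall fun x => ?_)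
    simpa [mul_assoc] using hconv x
  refine ⟨hInt, ?_⟩
  calc |∫ x, (∫ y, φ₁ y * φ₂ (y - x)) ∂μ|
      = ‖∫ x, (∫ y, φ₁ y * φ₂ (y - x)) ∂μ‖ := (Real.norm_eq_abs _).symm
    _ ≤ ∫ x, ‖∫ y, φ₁ y * φ₂ (y - x)‖ ∂μ := norm_integral_le_integral_norm _
    _ ≤ ∫ x, (S₁ * S₂ * (2 * 4 ^ l) * J) * (1 + ‖x‖ ^ k)⁻¹ ∂μ := by
        refine integral_mono_of_nonneg (Filter.Eventually.of_forall fun x => norm_nonneg _)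
          (hμ.const_mul _) (Filter.Eventually.of_forall fun x => ?_)
        simpa [mul_assoc] using hconv x
    _ = (S₁ * S₂ * (2 * 4 ^ l) * J) * C₀ := integral_const_mul _ _
    _ ≤ (2 * 4 ^ l * J * C₀ + 1) * S₁ * S₂ := by nlinarith [mul_nonneg hS₁0 hS₂0]
end

section
/- Let ν be a symmetric Lévy measure on ℝ^d and u ∈ C_c^∞(ℝ^d). Writing u⁻(x) := min(u(x), 0) for the negative part of u, the integral ∫_{ℝ^d} u⁻(x) Lu(x) dx is well defined and satisfies ∫_{ℝ^d} u⁻(x) Lu(x) dx ≤ 0. -/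
/-!
Write `u⁻ = min u 0` and `δ_y u(x) = u(x+y) + u(x−y) − 2u(x)`. For a fixed jump `y`, translation
invariance of Lebesgue measure gives the discrete integration by parts
`∫ u⁻(x) δ_y u(x) dx = −∫ (u⁻(x+y) − u⁻(x)) (u(x+y) − u(x)) dx`, and the right-hand side is
`≤ 0` because `u⁻` is a nondecreasing function of `u`. Since `|δ_y u(x)| ≤ K min(1, |y|²)`, the
function `(x, y) ↦ u⁻(x) δ_y u(x)` is integrable for `dx ⊗ ν`, and Fubini (which only needs `ν`
to be s-finite, true as `ν` is σ-finite off the origin) lets us integrate in `x` first.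
-/

open MeasureTheory

/-- The nonlocal operator `L u(x) = (1/2) ∫ (u(x+y) + u(x−y) − 2u(x)) ν(dy)`. -/
noncomputable def Lop {d : ℕ} (ν : Measure (EuclideanSpace ℝ (Fin d)))
    (u : EuclideanSpace ℝ (Fin d) → ℝ) (x : EuclideanSpace ℝ (Fin d)) : ℝ :=
  (1 / 2) * ∫ y, (u (x + y) + u (x - y) - 2 * u x) ∂ν

open scoped NNReal

def secondDiff {G : Type*} [AddCommGroup G] (u : G → ℝ) (x y : G) : ℝ :=
  u (x + y) + u (x - y) - 2 * u x

theorem sFinite_of_integrable_min_one_norm_sq {E : Type*} [NormedAddCommGroup E]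
    [MeasurableSpace E] [MeasurableSingletonClass E] {ν : Measure E}
    (hν : Integrable (fun y => min 1 (‖y‖ ^ 2)) ν) : SFinite ν := by
  have : SigmaFinite (ν.restrict {0}ᶜ) := by
    refine ⟨⟨⟨fun n => {y | (1 : ℝ) / (n + 1) ≤ min 1 (‖y‖ ^ 2)} ∪ {0},
      fun _ => Set.mem_univ _, fun n => ?_, ?_⟩⟩⟩
    · calc ν.restrict {0}ᶜ ({y | (1 : ℝ) / (n + 1) ≤ min 1 (‖y‖ ^ 2)} ∪ {0})
          ≤ ν {y | (1 : ℝ) / (n + 1) ≤ min 1 (‖y‖ ^ 2)} + ν.restrict {0}ᶜ {0} :=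
            (measure_union_le _ _).trans (add_le_add_left (Measure.restrict_apply_le _ _) _)
        _ < ⊤ := by
          rw [Measure.restrict_apply (measurableSet_singleton 0), Set.inter_compl_self,
            measure_empty, add_zero]
          exact hν.measure_ge_lt_top (by positivity)
    · refine Set.eq_univ_of_forall fun y => Set.mem_iUnion.2 ?_
      rcases eq_or_ne y 0 with rfl | hy
      · exact ⟨0, Or.inr rfl⟩
      · have : 0 < min 1 (‖y‖ ^ 2) := by positivity
        obtain ⟨n, hn⟩ := exists_nat_one_div_lt this
        exact ⟨n, Or.inl hn.le⟩
  rw [← Measure.restrict_add_restrict_compl (μ := ν) (measurableSet_singleton 0),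
    Measure.restrict_singleton]
  infer_instance

section SecondDifference

variable {E : Type*} [NormedAddCommGroup E] [NormedSpace ℝ E] {u : E → ℝ}

theorem abs_secondDiff_le_of_lipschitzWith_fderiv {L : ℝ≥0} (hu : Differentiable ℝ u)
    (hL : LipschitzWith L (fderiv ℝ u)) (x y : E) :
    |secondDiff u x y| ≤ 2 * L * ‖y‖ ^ 2 := by
  -- mean value theorem for `t ↦ u (x + t • y) + u (x - t • y)` on `[0, 1]`
  have hderiv : ∀ t : ℝ, HasDerivAt (fun t : ℝ => u (x + t • y) + u (x - t • y))
      (fderiv ℝ u (x + t • y) y - fderiv ℝ u (x - t • y) y) t := by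
    intro t
    have hplus : HasDerivAt (fun t : ℝ => x + t • y) y t := by
      simpa using ((hasDerivAt_id t).smul_const y).const_add x
    have hminus : HasDerivAt (fun t : ℝ => x - t • y) (-y) t := by
      simpa using ((hasDerivAt_id t).smul_const y).const_sub x
    exact (((hu _).hasFDerivAt.comp_hasDerivAt t hplus).add
      ((hu _).hasFDerivAt.comp_hasDerivAt t hminus)).congr_deriv (by simp [sub_eq_add_neg])
  have hbound : ∀ t ∈ Set.Ico (0 : ℝ) 1,
      ‖fderiv ℝ u (x + t • y) y - fderiv ℝ u (x - t • y) y‖ ≤ 2 * L * ‖y‖ ^ 2 := by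
    rintro t ⟨ht0, ht1⟩
    have hdist : x + t • y - (x - t • y) = (2 * t) • y := by rw [two_mul, add_smul]; abel
    calc ‖fderiv ℝ u (x + t • y) y - fderiv ℝ u (x - t • y) y‖
        ≤ ‖fderiv ℝ u (x + t • y) - fderiv ℝ u (x - t • y)‖ * ‖y‖ :=
          (fderiv ℝ u (x + t • y) - fderiv ℝ u (x - t • y)).le_opNorm y
      _ ≤ L * ((2 * t) * ‖y‖) * ‖y‖ := by
          gcongr
          have := hL.norm_sub_le (x + t • y) (x - t • y)
          rwa [hdist, norm_smul, Real.norm_eq_abs, abs_of_nonneg (by positivity)] at this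
      _ ≤ L * (2 * ‖y‖) * ‖y‖ := by gcongr; linarith
      _ = 2 * L * ‖y‖ ^ 2 := by ring
  have := norm_image_sub_le_of_norm_deriv_le_segment_01'
    (fun t _ => (hderiv t).hasDerivWithinAt) hbound
  simp only [one_smul, zero_smul, add_zero, sub_zero, Real.norm_eq_abs] at this
  rwa [secondDiff, two_mul]

theorem HasCompactSupport.exists_abs_secondDiff_le (hcu : HasCompactSupport u)
    (hu : ContDiff ℝ 2 u) : ∃ K : ℝ, ∀ x y : E, |secondDiff u x y| ≤ K * min 1 (‖y‖ ^ 2) := by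
  obtain ⟨M, hM⟩ := hcu.exists_bound_of_continuous hu.continuous
  obtain ⟨L, hL⟩ := (hu.fderiv_right (m := 1) le_rfl).lipschitzWith_of_hasCompactSupport
    (hcu.fderiv ℝ) one_ne_zero
  refine ⟨max (4 * M) (2 * L), fun x y => ?_⟩
  rcases le_total (‖y‖ ^ 2) 1 with hy | hy
  · rw [min_eq_right hy]
    calc |secondDiff u x y| ≤ 2 * L * ‖y‖ ^ 2 :=
          abs_secondDiff_le_of_lipschitzWith_fderiv (hu.differentiable two_ne_zero) hL x y
      _ ≤ max (4 * M) (2 * L) * ‖y‖ ^ 2 := by gcongr; exact le_max_right _ _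
  · rw [min_eq_left hy, mul_one]
    have h₁ := hM (x + y); have h₂ := hM (x - y); have h₃ := hM x
    rw [Real.norm_eq_abs, abs_le] at h₁ h₂ h₃
    rw [secondDiff, abs_le]
    constructor <;> linarith [le_max_left (4 * M) (2 * L)]

end SecondDifference

section TranslationInvariance

variable {G : Type*} [NormedAddCommGroup G] [MeasurableSpace G] [BorelSpace G]
  {μ : Measure G} [μ.IsAddRightInvariant]

theorem integral_comp_add_right_sub_self {F : G → ℝ} (hF : Integrable F μ) (y : G) :
    ∫ x, (F (x + y) - F x) ∂μ = 0 := by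
  rw [integral_sub (hF.comp_add_right y) hF, integral_add_right_eq_self, sub_self]

theorem integral_mul_secondDiff_eq_neg [IsFiniteMeasureOnCompacts μ] {v u : G → ℝ}
    (hv : Continuous v) (hvc : HasCompactSupport v) (hu : Continuous u) (y : G) :
    ∫ x, v x * secondDiff u x y ∂μ = -∫ x, (v (x + y) - v x) * (u (x + y) - u x) ∂μ := by
  have integrable_mul : ∀ {f g : G → ℝ}, Continuous f → HasCompactSupport f → Continuous g →
      Integrable (fun x => f x * g x) μ := fun hf hfc hg =>
    (hf.mul hg).integrable_of_hasCompactSupport hfc.mul_right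
  have hcy : Continuous fun x : G => x - y := continuous_id.sub continuous_const
  have hvu : Integrable (fun x => v x * u x) μ := integrable_mul hv hvc hu
  have hvuy : Integrable (fun x => v x * u (x - y)) μ := integrable_mul hv hvc (hu.comp hcy)
  have hvd := integrable_mul (f := v) (g := fun x => secondDiff u x y) hv hvc
    (by unfold secondDiff; fun_prop)
  -- both brackets are differences `F (x + y) - F x`, with `F = v * u` and `F = v * u (· - y)`
  have hpointwise : (fun x => (v (x + y) - v x) * (u (x + y) - u x)) = fun x =>
      ((v (x + y) * u (x + y) - v x * u x) - (v (x + y) * u (x + y - y) - v x * u (x - y)))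
        - v x * secondDiff u x y := by
    ext x; rw [add_sub_cancel_right, secondDiff]; ring
  have hA : Integrable (fun x => v (x + y) * u (x + y) - v x * u x) μ :=
    (hvu.comp_add_right y).sub hvu
  have hB : Integrable (fun x => v (x + y) * u (x + y - y) - v x * u (x - y)) μ :=
    (hvuy.comp_add_right y).sub hvuy
  rw [hpointwise, integral_sub (by exact hA.sub hB) hvd, integral_sub hA hB,
    integral_comp_add_right_sub_self hvu, integral_comp_add_right_sub_self hvuy, sub_self,
    zero_sub, neg_neg]

theorem integral_mul_secondDiff_nonpos [IsFiniteMeasureOnCompacts μ] {v u : G → ℝ}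
    (hv : Continuous v) (hvc : HasCompactSupport v) (hu : Continuous u) (hvu : Monovary v u)
    (y : G) : ∫ x, v x * secondDiff u x y ∂μ ≤ 0 := by
  rw [integral_mul_secondDiff_eq_neg hv hvc hu, neg_nonpos]
  exact integral_nonneg fun x => hvu.sub_mul_sub_nonneg x (x + y)

end TranslationInvariance

theorem integrable_prod_mul_secondDiff {G : Type*} [NormedAddCommGroup G] [MeasurableSpace G]
    [BorelSpace G] [SecondCountableTopology G] {μ ν : Measure G} [SFinite ν] {v u φ : G → ℝ}
    {K : ℝ} (hvi : Integrable v μ) (hv : Continuous v) (hu : Continuous u)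
    (hφ : Integrable φ ν) (hK : ∀ x y, |secondDiff u x y| ≤ K * φ y) :
    Integrable (Function.uncurry fun x y => v x * secondDiff u x y) (μ.prod ν) := by
  refine ((hvi.abs.mul_const K).mul_prod hφ).mono' (by unfold secondDiff; fun_prop)
    (.of_forall fun p => ?_)
  rw [Function.uncurry_apply_pair, Real.norm_eq_abs, abs_mul, mul_assoc]
  exact mul_le_mul_of_nonneg_left (hK p.1 p.2) (abs_nonneg _)

theorem stmt_5_general (d : ℕ)
    (ν : Measure (EuclideanSpace ℝ (Fin d)))
    (hνint : Integrable (fun y => min 1 (‖y‖ ^ 2)) ν)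
    (u : EuclideanSpace ℝ (Fin d) → ℝ)
    (hu : ContDiff ℝ (⊤ : ℕ∞) u) (hcu : HasCompactSupport u) :
    Integrable (fun x => min (u x) 0 * Lop ν u x) ∧
    (∫ x, min (u x) 0 * Lop ν u x) ≤ 0 := by
  have := sFinite_of_integrable_min_one_norm_sq hνint
  obtain ⟨K, hK⟩ := hcu.exists_abs_secondDiff_le (hu.of_le (by norm_cast))
  set v := fun x => min (u x) 0
  have hv : Continuous v := hu.continuous.min continuous_const
  have hvc : HasCompactSupport v := hcu.comp_left (g := fun a => min a 0) (min_self 0)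
  have hvu : Monovary v u :=
    (monovary_self u).comp_monotone_left fun _ _ h => min_le_min_right 0 h
  have hint := integrable_prod_mul_secondDiff (hv.integrable_of_hasCompactSupport (μ := volume) hvc)
    hv hu.continuous hνint hK
  have hLop : ∀ x, v x * Lop ν u x = 1 / 2 * ∫ y, v x * secondDiff u x y ∂ν := fun x => by
    rw [Lop, integral_const_mul, mul_left_comm]; rfl
  refine ⟨(hint.integral_prod_left.const_mul _).congr (.of_forall fun x => (hLop x).symm), ?_⟩
  calc ∫ x, v x * Lop ν u x = 1 / 2 * ∫ x, ∫ y, v x * secondDiff u x y ∂ν := by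
        simp_rw [hLop]; exact integral_const_mul _ _
    _ = 1 / 2 * ∫ y, (∫ x, v x * secondDiff u x y) ∂ν := by rw [integral_integral_swap hint]
    _ ≤ 0 := mul_nonpos_of_nonneg_of_nonpos (by norm_num)
        (integral_nonpos fun y => integral_mul_secondDiff_nonpos hv hvc hu.continuous hvu y)

/-- For a symmetric Lévy measure ν and u ∈ C_c^∞(ℝ^d), writing
u⁻(x) := min(u(x),0), the integral ∫ u⁻(x) Lu(x) dx is well defined and ≤ 0. -/
theorem stmt_5 (d : ℕ) (hd : 1 ≤ d)
    (ν : Measure (EuclideanSpace ℝ (Fin d)))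
    (hν0 : ν {0} = 0)
    (hνsymm : ∀ A : Set (EuclideanSpace ℝ (Fin d)), MeasurableSet A → ν (-A) = ν A)
    (hνint : Integrable (fun y => min 1 (‖y‖ ^ 2)) ν)
    (u : EuclideanSpace ℝ (Fin d) → ℝ)
    (hu : ContDiff ℝ (⊤ : ℕ∞) u) (hcu : HasCompactSupport u) :
    Integrable (fun x => min (u x) 0 * Lop ν u x) ∧
    (∫ x, min (u x) 0 * Lop ν u x) ≤ 0 :=
  stmt_5_general d ν hνint u hu hcu
end
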